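/- The demographic parity criterion α_D(π) = |π̄(1) − π̄(0)| (with X a singleton) satisfies the selective-compliance vulnerability condition: for any ε ∈ (1/6, 1/4), the policies π_low(1) = 1/2 + ε, π_low(0) = 1/2 − ε and π_high(1) = 1/2 + 3ε, π_high(0) = 1/2 − 2ε, together with the compliance function c₀(a) = 1 iff a = 1, satisfy (i) α_D(π_low) < α_D(π_high), (ii) α_D of the combined policy (π_low where c₀ = 1, π_high otherwise) is strictly less than α_D(π_high), and (iii) α_D of the combined policy (π_high where c₀ = 1, π_low otherwise) is strictly less than α_D(π_high). -/
import Mathlib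


noncomputable section

def combB (π₁ π₂ : Bool → ℝ) (c : Bool → Bool) : Bool → ℝ :=
  fun a => if c a then π₁ a else π₂ a

def alphaD (π : Bool → ℝ) : ℝ := |π true - π false|

def piLow (ε : ℝ) : Bool → ℝ := fun a => if a then 1/2 + ε else 1/2 - ε

def piHigh (ε : ℝ) : Bool → ℝ := fun a => if a then 1/2 + 3 * ε else 1/2 - 2 * ε

theorem stmt16 (ε : ℝ) (hε0 : 1/6 < ε) (hε1 : ε < 1/4) :
    alphaD (piLow ε) < alphaD (piHigh ε) ∧
    alphaD (combB (piLow ε) (piHigh ε) (fun a => a)) < alphaD (piHigh ε) ∧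
    alphaD (combB (piHigh ε) (piLow ε) (fun a => a)) < alphaD (piHigh ε) := by
  have h0 : (0:ℝ) < ε := by linarith
  simp only [alphaD, combB, piLow, piHigh, if_true, if_false]
  norm_num
  constructor
  · rw [abs_of_pos (by linarith), abs_of_pos (by linarith)]; linarith
  constructor
  · rw [abs_of_pos (by linarith), abs_of_pos (by linarith)]; linarith
  · rw [abs_of_pos (by linarith), abs_of_pos (by linarith)]; linarith

end
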